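/- arXiv:1505.04093 — 2 statements merged into one kernel-verified Lean document; each statement's English description precedes it below -/
import Mathlib

section
/- There exist monotone reparametrizations φ_X of X and φ_Y of Y such that d(φ_X(t), φ_Y(t)) ≤ ε for all t ∈ [0,1] if and only if there exists u ∈ [0,m] such that (u, 0) ∈ g↑, (u+m, n) ∈ g_↓, u+m ≤ r↑(u, 0), and u ≤ r_↓(u+m, n). -/
open Set

noncomputable section

/-- The piecewise linear closed curve through the vertices `x 0, x 1, …`:
`f(i+α) = (1-α) • x i + α • x (i+1)`. -/
def fCurve {k : ℕ} (x : ℕ → EuclideanSpace ℝ (Fin k)) (t : ℝ) :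
    EuclideanSpace ℝ (Fin k) :=
  (1 - Int.fract t) • x (⌊t⌋.toNat) + Int.fract t • x (⌊t⌋.toNat + 1)

/-- The extension of the curve from `[0,m]` to `[0,2m]` by `f(u) = f(u-m)` for `u > m`. -/
def fCurveExt {k : ℕ} (m : ℕ) (x : ℕ → EuclideanSpace ℝ (Fin k)) (u : ℝ) :
    EuclideanSpace ℝ (Fin k) :=
  if u ≤ m then fCurve x u else fCurve x (u - m)

/-- The rectangle `D = [0,2m] × [0,n]`. -/
def Dfull (m n : ℕ) : Set (ℝ × ℝ) :=
  Icc (0:ℝ) (2*(m:ℝ)) ×ˢ Icc (0:ℝ) (n:ℝ)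

/-- The free space `D_ε = {(u,v) ∈ D : dist (f_X u) (f_Y v) ≤ ε}`. -/
def Dfree {k : ℕ} (m n : ℕ) (x y : ℕ → EuclideanSpace ℝ (Fin k)) (ε : ℝ) :
    Set (ℝ × ℝ) :=
  {p ∈ Dfull m n | dist (fCurveExt m x p.1) (fCurve y p.2) ≤ ε}

/-- The top side `T = [0,2m] × {n}` of `D`. -/
def Tside (m n : ℕ) : Set (ℝ × ℝ) := Icc (0:ℝ) (2*(m:ℝ)) ×ˢ {(n:ℝ)}

/-- The bottom side `B = [0,2m] × {0}` of `D`. -/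
def Bside (m : ℕ) : Set (ℝ × ℝ) := Icc (0:ℝ) (2*(m:ℝ)) ×ˢ {(0:ℝ)}

/-- A monotone (non-decreasing) path: a connected subset `γ ⊆ Dε` with
`(u-u')·(v-v') ≥ 0` for all `(u,v), (u',v') ∈ γ`. -/
def IsMonPath (Dε γ : Set (ℝ × ℝ)) : Prop :=
  γ ⊆ Dε ∧ IsConnected γ ∧
    ∀ p ∈ γ, ∀ q ∈ γ, (p.1 - q.1) * (p.2 - q.2) ≥ 0

/-- Two points are mutually reachable if some monotone path contains both. -/
def Reach (Dε : Set (ℝ × ℝ)) (p q : ℝ × ℝ) : Prop :=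
  ∃ γ : Set (ℝ × ℝ), IsMonPath Dε γ ∧ p ∈ γ ∧ q ∈ γ

/-- `g↓`: the points of `Dε` mutually reachable with at least one point of `B`. -/
def gDown (m : ℕ) (Dε : Set (ℝ × ℝ)) : Set (ℝ × ℝ) :=
  {p ∈ Dε | ∃ q ∈ Bside m, Reach Dε p q}

/-- `g↑`: the points of `Dε` mutually reachable with at least one point of `T`. -/
def gUp (m n : ℕ) (Dε : Set (ℝ × ℝ)) : Set (ℝ × ℝ) :=
  {p ∈ Dε | ∃ q ∈ Tside m n, Reach Dε p q}

/-- The pointer `r↑(p)`: the maximum `u* ∈ [0,2m]` such that `p` and `(u*, n)`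
are mutually reachable. -/
def rUp (m n : ℕ) (Dε : Set (ℝ × ℝ)) (p : ℝ × ℝ) : ℝ :=
  sSup {u : ℝ | u ∈ Icc (0:ℝ) (2*(m:ℝ)) ∧ Reach Dε p (u, (n:ℝ))}

/-- The pointer `r↓(p)`: for `p` with `p.2 > 0`, the maximum `u* ∈ [0,2m]` such
that `p` and `(u*, 0)` are mutually reachable; on the bottom side `r↓(u,0) = u`. -/
def rDown (m : ℕ) (Dε : Set (ℝ × ℝ)) (p : ℝ × ℝ) : ℝ :=
  if p.2 = 0 then p.1
  else sSup {u : ℝ | u ∈ Icc (0:ℝ) (2*(m:ℝ)) ∧ Reach Dε p (u, (0:ℝ))}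

/-- The cell `D_ij = [i-1,i] × [j-1,j]`. -/
def cellD (i j : ℕ) : Set (ℝ × ℝ) :=
  Icc ((i:ℝ)-1) (i:ℝ) ×ˢ Icc ((j:ℝ)-1) (j:ℝ)

/-- The top side `T_ij` of the cell `D_ij`. -/
def cellT (i j : ℕ) : Set (ℝ × ℝ) := Icc ((i:ℝ)-1) (i:ℝ) ×ˢ {(j:ℝ)}

/-- The bottom side `B_ij` of the cell `D_ij`. -/
def cellB (i j : ℕ) : Set (ℝ × ℝ) := Icc ((i:ℝ)-1) (i:ℝ) ×ˢ {((j:ℝ)-1)}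

/-- The right side `R_ij` of the cell `D_ij`. -/
def cellR (i j : ℕ) : Set (ℝ × ℝ) := {(i:ℝ)} ×ˢ Icc ((j:ℝ)-1) (j:ℝ)

/-- The left side `L_ij` of the cell `D_ij`. -/
def cellL (i j : ℕ) : Set (ℝ × ℝ) := {((i:ℝ)-1)} ×ˢ Icc ((j:ℝ)-1) (j:ℝ)

/-- The partial order `≼` on `D`: `(u1,v1) ≼ (u2,v2)` iff `u1 ≤ u2` and `v1 ≥ v2`. -/
def prec (p q : ℝ × ℝ) : Prop := p.1 ≤ q.1 ∧ q.2 ≤ p.2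

/-- `W_m`: continuous non-decreasing functions `w : [0,1] → [0,m]` with
`w 0 = 0` and `w 1 = m`. -/
def IsW (m : ℕ) (w : ℝ → ℝ) : Prop :=
  ContinuousOn w (Icc (0:ℝ) 1) ∧ MonotoneOn w (Icc (0:ℝ) 1) ∧
    (∀ t ∈ Icc (0:ℝ) 1, w t ∈ Icc (0:ℝ) (m:ℝ)) ∧ w 0 = 0 ∧ w 1 = m

/-- The cyclic shift of `[0,m]` by `τ`. -/
def cshift (m : ℕ) (τ t : ℝ) : ℝ := if t + τ ≤ m then t + τ else t + τ - m

/-- A monotone reparametrization of the closed `m`-gonal curve with vertices `x`. -/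
def IsReparam {k : ℕ} (m : ℕ) (x : ℕ → EuclideanSpace ℝ (Fin k))
    (φ : ℝ → EuclideanSpace ℝ (Fin k)) : Prop :=
  ∃ w : ℝ → ℝ, ∃ τ ∈ Icc (0:ℝ) (m:ℝ), IsW m w ∧
    ∀ t ∈ Icc (0:ℝ) 1, φ t = fCurve x (cshift m τ (w t))

/-!
Reparametrizations at distance at most `ε` amount to a monotone path in `Dε` from `(u, 0)` to
`(u + m, n)` for some `u ∈ [0, m]`: lift the simultaneous traversal to the doubled diagram, cut it
where `Y` passes through its starting vertex and translate the two parts by a period; conversely,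
a path read along `u + v` gives the reparametrizations.

Such a path exists iff the four conditions hold. Given them, the maxima `r↑(u, 0) ≥ u + m` and
`r↓(u + m, n) ≥ u` are attained, since the set of points reachable from a point is compact: every
monotone path is parametrized by `u + v`, so this set is the image under evaluation of a set of
monotone `1`-Lipschitz curves, compact by Tychonoff. The path from `(u, 0)` to the top and the
path from the bottom to `(u + m, n)` then cross, and gluing them at a crossing point gives the
path.
-/
section Curves

variable {k : ℕ} {x : ℕ → EuclideanSpace ℝ (Fin k)}

theorem fCurve_natCast (x : ℕ → EuclideanSpace ℝ (Fin k)) (i : ℕ) : fCurve x i = x i := by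
  simp [fCurve]

theorem fCurve_of_mem_Icc {i : ℕ} {t : ℝ} (ht : t ∈ Icc (i : ℝ) (i + 1)) :
    fCurve x t = (1 - (t - i)) • x i + (t - i) • x (i + 1) := by
  rcases ht.2.eq_or_lt with rfl | hlt
  · rw [← Nat.cast_add_one, fCurve_natCast]
    simp
  · have hfloor : ⌊t⌋ = i := Int.floor_eq_iff.2 ⟨mod_cast ht.1, mod_cast hlt⟩
    simp [fCurve, Int.fract, hfloor]

theorem continuousOn_fCurve (x : ℕ → EuclideanSpace ℝ (Fin k)) (N : ℕ) :
    ContinuousOn (fCurve x) (Icc 0 N) := by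
  induction N with
  | zero => simp
  | succ N ih =>
    have hlast : ContinuousOn (fCurve x) (Icc (N : ℝ) (N + 1)) :=
      ((continuous_const.sub (continuous_id.sub continuous_const)).smul continuous_const |>.add
        ((continuous_id.sub continuous_const).smul continuous_const)).continuousOn.congr
        fun t ht => fCurve_of_mem_Icc ht
    rw [Nat.cast_succ, ← Icc_union_Icc_eq_Icc N.cast_nonneg (by linarith)]
    exact ih.union_of_isClosed hlast isClosed_Icc isClosed_Icc

variable {m : ℕ}

theorem fCurveExt_of_le {u : ℝ} (h : u ≤ m) : fCurveExt m x u = fCurve x u := if_pos h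

theorem fCurve_cshift (τ w : ℝ) : fCurve x (cshift m τ w) = fCurveExt m x (w + τ) := by
  rw [cshift, fCurveExt, apply_ite (fCurve x)]

theorem fCurveExt_add_self (hx : x m = x 0) {r : ℝ} (h0 : 0 ≤ r) (h1 : r ≤ m) :
    fCurveExt m x (r + m) = fCurveExt m x r := by
  rcases h0.eq_or_lt with rfl | hpos
  · rw [zero_add, fCurveExt_of_le le_rfl, fCurveExt_of_le m.cast_nonneg, fCurve_natCast, hx,
      ← fCurve_natCast x 0, Nat.cast_zero]
  · rw [fCurveExt, if_neg (by linarith), add_sub_cancel_right, fCurveExt_of_le h1]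

theorem fCurveExt_add_of_mem (hx : x m = x 0) {a δ : ℝ} (hδ : δ = 0 ∨ δ = m ∨ δ = -m)
    (ha : a ∈ Icc 0 (2 * (m : ℝ))) (haδ : a + δ ∈ Icc 0 (2 * (m : ℝ))) :
    fCurveExt m x (a + δ) = fCurveExt m x a := by
  rcases hδ with rfl | rfl | rfl
  · rw [add_zero]
  · exact fCurveExt_add_self hx ha.1 (by linarith [haδ.2])
  · rw [← fCurveExt_add_self hx haδ.1 (by linarith [ha.2]), neg_add_cancel_right]

theorem continuousOn_fCurveExt (hx : x m = x 0) :
    ContinuousOn (fCurveExt m x) (Icc 0 (2 * (m : ℝ))) := by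
  have hleft : ContinuousOn (fCurveExt m x) (Icc 0 m) :=
    (continuousOn_fCurve x m).congr fun u hu => fCurveExt_of_le hu.2
  have hright : ContinuousOn (fCurveExt m x) (Icc (m : ℝ) (2 * m)) := by
    refine ((continuousOn_fCurve x m).comp (continuous_sub_right (m : ℝ)).continuousOn
      fun u hu => ⟨sub_nonneg.2 hu.1, by linarith [hu.2]⟩).congr fun u hu => ?_
    have := fCurveExt_add_self hx (r := u - m) (by linarith [hu.1]) (by linarith [hu.2])
    rwa [sub_add_cancel, fCurveExt_of_le (u := u - m) (by linarith [hu.2])] at this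
  rw [← Icc_union_Icc_eq_Icc m.cast_nonneg (by linarith [m.cast_nonneg (α := ℝ)])]
  exact hleft.union_of_isClosed hright isClosed_Icc isClosed_Icc

variable {n : ℕ} {y : ℕ → EuclideanSpace ℝ (Fin k)} {ε : ℝ}

theorem isCompact_Dfree (hx : x m = x 0) : IsCompact (Dfree m n x y ε) := by
  have hclosed : IsClosed (Dfree m n x y ε) :=
    (continuous_dist.comp_continuousOn
      (((continuousOn_fCurveExt hx).comp continuous_fst.continuousOn fun _ hp => hp.1).prodMk
        ((continuousOn_fCurve y n).comp continuous_snd.continuousOn fun _ hp => hp.2))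
      ).preimage_isClosed_of_isClosed (isClosed_Icc.prod isClosed_Icc) isClosed_Iic
  exact (isCompact_Icc.prod isCompact_Icc).of_isClosed_subset hclosed (sep_subset _ _)

end Curves

theorem lipschitzWith_one_of_monotone {c : ℝ → ℝ × ℝ} (hc : Monotone c)
    (hsum : LipschitzWith 1 fun s => (c s).1 + (c s).2) : LipschitzWith 1 c := by
  refine LipschitzWith.of_dist_le_mul fun s t => ?_
  wlog hst : s ≤ t generalizing s t
  · rw [dist_comm, dist_comm s]
    exact this t s (le_of_not_ge hst)
  have hσ := hsum.dist_le_mul s t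
  obtain ⟨h₁, h₂⟩ := Prod.le_def.1 (hc hst)
  simp only [Prod.dist_eq, Real.dist_eq, NNReal.coe_one, one_mul] at hσ ⊢
  rw [abs_sub_comm] at hσ ⊢
  rw [abs_of_nonneg (by linarith)] at hσ
  exact max_le (abs_le.2 ⟨by linarith, by linarith⟩) (abs_le.2 ⟨by linarith, by linarith⟩)

section Reach

variable {Dε γ : Set (ℝ × ℝ)} {p q r : ℝ × ℝ}

theorem IsMonPath.le_of_add_le (hγ : IsMonPath Dε γ) (hp : p ∈ γ) (hq : q ∈ γ)
    (h : p.1 + p.2 ≤ q.1 + q.2) : p ≤ q := by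
  have := hγ.2.2 p hp q hq
  constructor <;> by_contra! <;> nlinarith

theorem IsMonPath.eq_of_add_eq (hγ : IsMonPath Dε γ) (hp : p ∈ γ) (hq : q ∈ γ)
    (h : p.1 + p.2 = q.1 + q.2) : p = q :=
  le_antisymm (hγ.le_of_add_le hp hq h.le) (hγ.le_of_add_le hq hp h.ge)

theorem Reach.symm (h : Reach Dε p q) : Reach Dε q p :=
  let ⟨γ, hγ, hp, hq⟩ := h
  ⟨γ, hγ, hq, hp⟩

theorem Reach.mem_left (h : Reach Dε p q) : p ∈ Dε :=
  let ⟨_, hγ, hp, _⟩ := h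
  hγ.1 hp

theorem Reach.mem_right (h : Reach Dε p q) : q ∈ Dε :=
  h.symm.mem_left

theorem Reach.le_of_add_le (h : Reach Dε p q) (hσ : p.1 + p.2 ≤ q.1 + q.2) : p ≤ q :=
  let ⟨_, hγ, hp, hq⟩ := h
  hγ.le_of_add_le hp hq hσ

theorem Reach.le_of_snd_lt (h : Reach Dε p q) (hpq : p.2 < q.2) : p ≤ q := by
  rcases le_total (p.1 + p.2) (q.1 + q.2) with hσ | hσ
  · exact h.le_of_add_le hσ
  · exact absurd (h.symm.le_of_add_le hσ).2 hpq.not_ge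

theorem reach_of_monotoneOn {c : ℝ → ℝ × ℝ} {a b : ℝ} (hab : a ≤ b)
    (hmono : MonotoneOn c (Icc a b)) (hcont : ContinuousOn c (Icc a b))
    (hD : MapsTo c (Icc a b) Dε) : Reach Dε (c a) (c b) := by
  refine ⟨c '' Icc a b, ⟨hD.image_subset, (isConnected_Icc hab).image c hcont, ?_⟩,
    mem_image_of_mem c (left_mem_Icc.2 hab), mem_image_of_mem c (right_mem_Icc.2 hab)⟩
  rintro _ ⟨s, hs, rfl⟩ _ ⟨t, ht, rfl⟩
  rcases le_total s t with hst | hst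
  · obtain ⟨h₁, h₂⟩ := hmono hs ht hst
    exact mul_nonneg_of_nonpos_of_nonpos (sub_nonpos.2 h₁) (sub_nonpos.2 h₂)
  · obtain ⟨h₁, h₂⟩ := hmono ht hs hst
    exact mul_nonneg (sub_nonneg.2 h₁) (sub_nonneg.2 h₂)

theorem reach_of_monotone {c : ℝ → ℝ × ℝ} (hmono : Monotone c) (hcont : Continuous c)
    (hD : ∀ s, c s ∈ Dε) (s t : ℝ) : Reach Dε (c s) (c t) := by
  wlog hst : s ≤ t generalizing s t
  · exact (this t s (le_of_not_ge hst)).symm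
  exact reach_of_monotoneOn hst (hmono.monotoneOn _) hcont.continuousOn fun r _ => hD r

def monotoneCurves (Dε : Set (ℝ × ℝ)) : Set (ℝ → ℝ × ℝ) :=
  {c | Monotone c ∧ LipschitzWith 1 c ∧ ∀ s, c s ∈ Dε}

theorem isCompact_monotoneCurves (hD : IsCompact Dε) : IsCompact (monotoneCurves Dε) := by
  have hpi : IsCompact (univ.pi fun _ : ℝ => Dε) := isCompact_univ_pi fun _ => hD
  have hcurves : monotoneCurves Dε =
      {c | Monotone c} ∩ {c | LipschitzWith 1 c} ∩ ⋂ s, (fun c => c s) ⁻¹' Dε := by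
    ext c
    simp [monotoneCurves, and_assoc]
  refine hpi.of_isClosed_subset ?_ fun c hc => mem_univ_pi.2 hc.2.2
  rw [hcurves]
  exact (isClosed_monotone.inter (isClosed_setOfPred_lipschitzWith 1)).inter
    (isClosed_iInter fun s => hD.isClosed.preimage (continuous_apply s))

theorem reach_of_mem_monotoneCurves {c : ℝ → ℝ × ℝ} (hc : c ∈ monotoneCurves Dε) (s t : ℝ) :
    Reach Dε (c s) (c t) :=
  reach_of_monotone hc.1 hc.2.1.continuous hc.2.2 s t

/-- `u + v` is injective on a monotone path and, by connectedness, takes every value between its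
values at `p` and `q`; its inverse, extended by constants, is the curve. -/
theorem Reach.exists_curve (h : Reach Dε p q) (hpq : p ≤ q) :
    ∃ c ∈ monotoneCurves Dε, (∀ s ≤ p.1 + p.2, c s = p) ∧ (∀ s, q.1 + q.2 ≤ s → c s = q) ∧
      ∀ s ∈ Icc (p.1 + p.2) (q.1 + q.2), (c s).1 + (c s).2 = s := by
  obtain ⟨γ, hγ, hp, hq⟩ := h
  have hσ : p.1 + p.2 ≤ q.1 + q.2 := add_le_add hpq.1 hpq.2
  have hlevel : ∀ s : Icc (p.1 + p.2) (q.1 + q.2), ∃ r ∈ γ, r.1 + r.2 = s := fun s =>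
    (hγ.2.1.image _ (continuous_fst.add continuous_snd).continuousOn).isPreconnected.Icc_subset
      ⟨p, hp, rfl⟩ ⟨q, hq, rfl⟩ s.2
  choose r hrγ hrσ using hlevel
  have hmono : Monotone (r ∘ projIcc _ _ hσ) := fun s t hst =>
    hγ.le_of_add_le (hrγ _) (hrγ _) <| by
      simp only [Function.comp_apply, hrσ]
      exact monotone_projIcc hσ hst
  have hsum : (fun s => ((r ∘ projIcc _ _ hσ) s).1 + ((r ∘ projIcc _ _ hσ) s).2) =
      Subtype.val ∘ projIcc _ _ hσ :=
    funext fun s => hrσ _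
  refine ⟨r ∘ projIcc _ _ hσ, ⟨hmono, lipschitzWith_one_of_monotone hmono ?_,
    fun s => hγ.1 (hrγ _)⟩, fun s hs => ?_, fun s hs => ?_, fun s hs => ?_⟩
  · simpa only [hsum, mul_one] using (LipschitzWith.subtype_val _).comp (LipschitzWith.projIcc hσ)
  · exact hγ.eq_of_add_eq (hrγ _) hp (by rw [Function.comp_apply, hrσ, projIcc_of_le_left hσ hs])
  · exact hγ.eq_of_add_eq (hrγ _) hq (by rw [Function.comp_apply, hrσ, projIcc_of_right_le hσ hs])
  · rw [Function.comp_apply, hrσ, projIcc_of_mem hσ hs]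

theorem Reach.trans (h₁ : Reach Dε p q) (h₂ : Reach Dε q r) (hpq : p ≤ q) (hqr : q ≤ r) :
    Reach Dε p r := by
  obtain ⟨c₁, hc₁, hp₁, hq₁, -⟩ := h₁.exists_curve hpq
  obtain ⟨c₂, hc₂, hq₂, hr₂, -⟩ := h₂.exists_curve hqr
  have hσpq : p.1 + p.2 ≤ q.1 + q.2 := add_le_add hpq.1 hpq.2
  have hσqr : q.1 + q.2 ≤ r.1 + r.2 := add_le_add hqr.1 hqr.2
  -- `c₁` rests at `q` from `q`'s parameter on and `c₂` rests at `q` before it, so this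
  -- runs along `c₁` and then along `c₂`.
  have hD : ∀ s, c₁ s + c₂ s - q ∈ Dε := fun s => by
    rcases le_total s (q.1 + q.2) with hs | hs
    · rw [hq₂ s hs, add_sub_cancel_right]; exact hc₁.2.2 s
    · rw [hq₁ s hs, add_sub_cancel_left]; exact hc₂.2.2 s
  have := reach_of_monotone (fun s t hst => sub_le_sub_right (add_le_add (hc₁.1 hst) (hc₂.1 hst)) q)
    ((hc₁.2.1.continuous.add hc₂.2.1.continuous).sub continuous_const) hD (p.1 + p.2) (r.1 + r.2)
  rwa [hp₁ _ le_rfl, hq₂ _ hσpq, hq₁ _ hσqr, hr₂ _ le_rfl, add_sub_cancel_right,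
    add_sub_cancel_left] at this

end Reach

section Closed

variable {Dε : Set (ℝ × ℝ)}

/-- With `a ≤ u + v ≤ b` on `Dε`, the points reachable from `p` are the values at `b` (or `a`) of
the curves of `monotoneCurves Dε` through `p` at `a` (or `b`). -/
theorem isClosed_setOf_reach (hD : IsCompact Dε) (p : ℝ × ℝ) : IsClosed {q | Reach Dε p q} := by
  have hσ : Continuous fun r : ℝ × ℝ => r.1 + r.2 := continuous_fst.add continuous_snd
  obtain ⟨a, ha⟩ := hD.bddBelow_image hσ.continuousOn
  obtain ⟨b, hb⟩ := hD.bddAbove_image hσ.continuousOn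
  have hthrough : ∀ s, IsCompact {c ∈ monotoneCurves Dε | c s = p} := fun s =>
    (isCompact_monotoneCurves hD).inter_right (isClosed_eq (continuous_apply s) continuous_const)
  have hσa : ∀ r ∈ Dε, a ≤ r.1 + r.2 := fun r hr => ha ⟨r, hr, rfl⟩
  have hσb : ∀ r ∈ Dε, r.1 + r.2 ≤ b := fun r hr => hb ⟨r, hr, rfl⟩
  have hreach : {q | Reach Dε p q} = (fun c => c b) '' {c ∈ monotoneCurves Dε | c a = p} ∪
      (fun c => c a) '' {c ∈ monotoneCurves Dε | c b = p} := by
    ext q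
    constructor
    · intro h
      rcases le_total (p.1 + p.2) (q.1 + q.2) with hpq | hqp
      · obtain ⟨c, hc, hcp, hcq, -⟩ := h.exists_curve (h.le_of_add_le hpq)
        exact Or.inl ⟨c, ⟨hc, hcp a (hσa p h.mem_left)⟩, hcq b (hσb q h.mem_right)⟩
      · obtain ⟨c, hc, hcq, hcp, -⟩ := h.symm.exists_curve (h.symm.le_of_add_le hqp)
        exact Or.inr ⟨c, ⟨hc, hcp b (hσb p h.mem_left)⟩, hcq a (hσa q h.mem_right)⟩
    · rintro (⟨c, ⟨hc, rfl⟩, rfl⟩ | ⟨c, ⟨hc, rfl⟩, rfl⟩) <;>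
        exact reach_of_mem_monotoneCurves hc _ _
  rw [hreach]
  exact (((hthrough a).image (continuous_apply b)).union
    ((hthrough b).image (continuous_apply a))).isClosed

theorem reach_csSup (hD : IsCompact Dε) {p : ℝ × ℝ} {v M : ℝ}
    (h : ∃ a ∈ Icc 0 M, Reach Dε p (a, v)) :
    Reach Dε p (sSup {a | a ∈ Icc 0 M ∧ Reach Dε p (a, v)}, v) :=
  (IsClosed.csSup_mem (isClosed_Icc.inter ((isClosed_setOf_reach hD p).preimage
    (Continuous.prodMk_left v))) h (bddAbove_Icc.mono fun _ ha => ha.1)).2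

end Closed

/-- Parametrized by `u + v`, the two paths swap their vertical order on `[a' + v₀, b + v₁]`, so
they meet there; follow the first one up to the meeting point and the second one after it. -/
theorem reach_of_crossing {Dε : Set (ℝ × ℝ)} {a a' b b' v₀ v₁ : ℝ}
    (h₁ : Reach Dε (a, v₀) (b', v₁)) (h₂ : Reach Dε (a', v₀) (b, v₁))
    (ha : a ≤ a') (hb : b ≤ b') (hv : v₀ < v₁) : Reach Dε (a, v₀) (b, v₁) := by
  have hle₁ := h₁.le_of_snd_lt hv
  have hle₂ := h₂.le_of_snd_lt hv
  obtain ⟨c₁, hc₁, hp₁, hq₁, hσ₁⟩ := h₁.exists_curve hle₁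
  obtain ⟨c₂, hc₂, hp₂, hq₂, hσ₂⟩ := h₂.exists_curve hle₂
  simp only at hp₁ hq₁ hσ₁ hp₂ hq₂ hσ₂
  have hab' : a' + v₀ ≤ b + v₁ := add_le_add hle₂.1 hle₂.2
  have hleft : (c₂ (a' + v₀)).2 ≤ (c₁ (a' + v₀)).2 := by
    rw [hp₂ _ le_rfl]
    simpa only [hp₁ _ le_rfl] using (hc₁.1 (show a + v₀ ≤ a' + v₀ by linarith)).2
  have hright : (c₁ (b + v₁)).2 ≤ (c₂ (b + v₁)).2 := by
    rw [hq₂ _ le_rfl]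
    simpa only [hq₁ _ le_rfl] using (hc₁.1 (show b + v₁ ≤ b' + v₁ by linarith)).2
  obtain ⟨s, hs, hs0⟩ := intermediate_value_Icc' hab'
    ((hc₁.2.1.continuous.snd.sub hc₂.2.1.continuous.snd).continuousOn)
    ⟨sub_nonpos.2 hright, sub_nonneg.2 hleft⟩
  have hcross : c₁ s = c₂ s := by
    rw [Pi.sub_apply, sub_eq_zero] at hs0
    have := hσ₁ s ⟨by linarith [hs.1], by linarith [hs.2]⟩
    have := hσ₂ s hs
    exact Prod.ext (by linarith) (by linarith)
  have hr₁ := reach_of_mem_monotoneCurves hc₁ (a + v₀) s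
  have hr₂ := reach_of_mem_monotoneCurves hc₂ s (b + v₁)
  rw [hp₁ _ le_rfl, hcross] at hr₁
  rw [hq₂ _ le_rfl] at hr₂
  refine hr₁.trans hr₂ ?_ ?_
  · rw [← hcross, ← hp₁ _ le_rfl]
    exact hc₁.1 (by linarith [hs.1])
  · rw [← hq₂ _ le_rfl]
    exact hc₂.1 hs.2

section Conditions

variable {m n : ℕ} {Dε : Set (ℝ × ℝ)} {u : ℝ}

theorem conditions_of_reach (hn : (0 : ℝ) < n) (hu : u ∈ Icc 0 (m : ℝ))
    (h : Reach Dε (u, 0) (u + m, n)) :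
    (u, (0 : ℝ)) ∈ gUp m n Dε ∧ (u + m, (n : ℝ)) ∈ gDown m Dε ∧
      u + m ≤ rUp m n Dε (u, 0) ∧ u ≤ rDown m Dε (u + m, n) := by
  have hu₀ : u ∈ Icc 0 (2 * (m : ℝ)) := ⟨hu.1, by linarith [hu.2]⟩
  have hum : u + m ∈ Icc 0 (2 * (m : ℝ)) := ⟨by linarith [hu.1], by linarith [hu.2]⟩
  refine ⟨⟨h.mem_left, _, ⟨hum, mem_singleton _⟩, h⟩,
    ⟨h.mem_right, _, ⟨hu₀, mem_singleton _⟩, h.symm⟩,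
    le_csSup (bddAbove_Icc.mono fun _ ha => ha.1) ⟨hum, h⟩, ?_⟩
  rw [rDown, if_neg hn.ne']
  exact le_csSup (bddAbove_Icc.mono fun _ ha => ha.1) ⟨hu₀, h.symm⟩

theorem reach_of_conditions (hD : IsCompact Dε) (hn : (0 : ℝ) < n)
    (hup : (u, (0 : ℝ)) ∈ gUp m n Dε) (hdown : (u + m, (n : ℝ)) ∈ gDown m Dε)
    (hrUp : u + m ≤ rUp m n Dε (u, 0)) (hrDown : u ≤ rDown m Dε (u + m, n)) :
    Reach Dε (u, 0) (u + m, n) := by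
  obtain ⟨-, ⟨a, _⟩, ⟨ha, rfl⟩, hreach⟩ := hup
  obtain ⟨-, ⟨a', _⟩, ⟨ha', rfl⟩, hreach'⟩ := hdown
  rw [rDown, if_neg hn.ne'] at hrDown
  exact reach_of_crossing (reach_csSup hD ⟨a, ha, hreach⟩)
    (reach_csSup hD ⟨a', ha', hreach'⟩).symm hrDown hrUp hn

end Conditions

section Reparam

variable {k m n : ℕ} {x y : ℕ → EuclideanSpace ℝ (Fin k)} {ε : ℝ}

theorem isW_of_monotone {w : ℝ → ℝ} (hmono : Monotone w) (hcont : Continuous w) (h0 : w 0 = 0)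
    (h1 : w 1 = m) : IsW m w :=
  ⟨hcont.continuousOn, hmono.monotoneOn _, fun _ ht => ⟨h0 ▸ hmono ht.1, h1 ▸ hmono ht.2⟩, h0, h1⟩

theorem exists_reparams_of_reach {u : ℝ} (hu : u ∈ Icc 0 (m : ℝ))
    (h : Reach (Dfree m n x y ε) (u, 0) (u + m, n)) :
    ∃ φX φY : ℝ → EuclideanSpace ℝ (Fin k), IsReparam m x φX ∧ IsReparam n y φY ∧
      ∀ t ∈ Icc (0 : ℝ) 1, dist (φX t) (φY t) ≤ ε := by
  obtain ⟨c, ⟨hmono, hlip, hD⟩, hp, hq, -⟩ :=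
    h.exists_curve (Prod.mk_le_mk.2 ⟨le_add_of_nonneg_right m.cast_nonneg, n.cast_nonneg⟩)
  set g : ℝ → ℝ × ℝ := fun t => c (u + (m + n) * t)
  have hg : Monotone g := hmono.comp fun s t hst => by gcongr
  have hgc : Continuous g := hlip.continuous.comp (by fun_prop)
  have hg0 : g 0 = (u, 0) := hp _ (by simp)
  have hg1 : g 1 = (u + m, (n : ℝ)) := hq _ (by simp [add_assoc])
  refine ⟨fun t => fCurveExt m x (g t).1, fun t => fCurve y (g t).2,
    ⟨fun t => (g t).1 - u, u, hu, isW_of_monotone (fun s t hst => by simpa using (hg hst).1)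
      (hgc.fst.sub continuous_const) (by simp [hg0]) (by simp [hg1]), fun t _ => ?_⟩,
    ⟨fun t => (g t).2, 0, ⟨le_rfl, n.cast_nonneg⟩, isW_of_monotone (fun s t hst => (hg hst).2)
      hgc.snd (by simp [hg0]) (by simp [hg1]), fun t ht => ?_⟩, fun t _ => (hD _).2⟩
  · rw [fCurve_cshift, sub_add_cancel]
  · rw [fCurve_cshift, add_zero, fCurveExt_of_le]
    simpa [hg1] using (hg ht.2).2

theorem IsReparam.exists_lift {φ : ℝ → EuclideanSpace ℝ (Fin k)} (h : IsReparam m x φ) :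
    ∃ W : ℝ → ℝ, MonotoneOn W (Icc 0 1) ∧ ContinuousOn W (Icc 0 1) ∧ W 0 ≤ m ∧ W 1 = W 0 + m ∧
      ∀ t ∈ Icc (0 : ℝ) 1, W t ∈ Icc 0 (2 * (m : ℝ)) ∧ φ t = fCurveExt m x (W t) := by
  obtain ⟨w, τ, hτ, ⟨hc, hmono, hw, h0, h1⟩, hφ⟩ := h
  refine ⟨fun t => w t + τ, fun s hs t ht hst => add_le_add (hmono hs ht hst) le_rfl,
    hc.add continuousOn_const, by simp [h0, hτ.2], by simp [h0, h1, add_comm], fun t ht => ?_⟩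
  rw [hφ t ht, fCurve_cshift]
  exact ⟨⟨by linarith [(hw t ht).1, hτ.1], by linarith [(hw t ht).2, hτ.2]⟩, rfl⟩

theorem shift_mem_Dfree (hx : x m = x 0) (hy : y n = y 0) {a b δX δY : ℝ}
    (hδX : δX = 0 ∨ δX = m ∨ δX = -m) (hδY : δY = 0 ∨ δY = n ∨ δY = -n)
    (ha : a ∈ Icc 0 (2 * (m : ℝ))) (hb : b ∈ Icc 0 (2 * (n : ℝ)))
    (hd : dist (fCurveExt m x a) (fCurveExt n y b) ≤ ε)
    (haδ : a + δX ∈ Icc 0 (2 * (m : ℝ))) (hbδ : b + δY ∈ Icc 0 (n : ℝ)) :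
    (a + δX, b + δY) ∈ Dfree m n x y ε := by
  refine ⟨⟨haδ, hbδ⟩, ?_⟩
  rwa [fCurveExt_add_of_mem hx hδX ha haδ, ← fCurveExt_of_le hbδ.2,
    fCurveExt_add_of_mem hy hδY hb ⟨hbδ.1, by linarith [hbδ.2, n.cast_nonneg (α := ℝ)]⟩]

theorem reach_of_shifted_lift (hx : x m = x 0) (hy : y n = y 0) {W V : ℝ → ℝ}
    (hWm : MonotoneOn W (Icc 0 1)) (hVm : MonotoneOn V (Icc 0 1))
    (hWc : ContinuousOn W (Icc 0 1)) (hVc : ContinuousOn V (Icc 0 1))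
    (hlift : ∀ t ∈ Icc (0 : ℝ) 1, W t ∈ Icc 0 (2 * (m : ℝ)) ∧ V t ∈ Icc 0 (2 * (n : ℝ)) ∧
      dist (fCurveExt m x (W t)) (fCurveExt n y (V t)) ≤ ε)
    {a b δX δY : ℝ} (ha : 0 ≤ a) (hab : a ≤ b) (hb : b ≤ 1)
    (hδX : δX = 0 ∨ δX = m ∨ δX = -m) (hδY : δY = 0 ∨ δY = n ∨ δY = -n)
    (hshift : ∀ t ∈ Icc a b, W t + δX ∈ Icc 0 (2 * (m : ℝ)) ∧ V t + δY ∈ Icc 0 (n : ℝ)) :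
    Reach (Dfree m n x y ε) (W a + δX, V a + δY) (W b + δX, V b + δY) := by
  have hsub : Icc a b ⊆ Icc 0 1 := Icc_subset_Icc ha hb
  refine reach_of_monotoneOn (c := fun t => (W t + δX, V t + δY)) hab
    (fun _ hs _ ht hst => ⟨add_le_add (hWm (hsub hs) (hsub ht) hst) le_rfl,
      add_le_add (hVm (hsub hs) (hsub ht) hst) le_rfl⟩)
    (((hWc.mono hsub).add continuousOn_const).prodMk ((hVc.mono hsub).add continuousOn_const))
    fun t ht => ?_
  obtain ⟨hW, hV, hd⟩ := hlift t (hsub ht)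
  exact shift_mem_Dfree hx hy hδX hδY hW hV hd (hshift t ht).1 (hshift t ht).2

/-- Cut at the time `ts` when `V` passes through `n`: the curve after `ts`, shifted down by `n`,
and the curve before `ts`, shifted right by `m`, are monotone paths in `Dfree` which join up. -/
theorem exists_reach_of_lift (hx : x m = x 0) (hy : y n = y 0) {W V : ℝ → ℝ}
    (hWm : MonotoneOn W (Icc 0 1)) (hVm : MonotoneOn V (Icc 0 1))
    (hWc : ContinuousOn W (Icc 0 1)) (hVc : ContinuousOn V (Icc 0 1))
    (hW1 : W 1 = W 0 + m) (hV0 : V 0 ≤ n) (hV1 : V 1 = V 0 + n)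
    (hlift : ∀ t ∈ Icc (0 : ℝ) 1, W t ∈ Icc 0 (2 * (m : ℝ)) ∧ V t ∈ Icc 0 (2 * (n : ℝ)) ∧
      dist (fCurveExt m x (W t)) (fCurveExt n y (V t)) ≤ ε) :
    ∃ u ∈ Icc 0 (m : ℝ), Reach (Dfree m n x y ε) (u, 0) (u + m, n) := by
  obtain ⟨ts, hts, hVts⟩ : ∃ ts ∈ Icc (0 : ℝ) 1, V ts = n :=
    intermediate_value_Icc zero_le_one hVc
      ⟨hV0, by linarith [(hlift 0 ⟨le_rfl, zero_le_one⟩).2.1.1]⟩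
  obtain ⟨δ, hδ, hu⟩ : ∃ δ : ℝ, (δ = 0 ∨ δ = -m) ∧ W ts + δ ∈ Icc 0 (m : ℝ) := by
    by_cases hle : W ts ≤ m
    · exact ⟨0, Or.inl rfl, by linarith [(hlift ts hts).1.1], by linarith⟩
    · exact ⟨-m, Or.inr rfl, by linarith, by linarith [(hlift ts hts).1.2]⟩
  have hfirst := reach_of_shifted_lift (δX := δ) (δY := -n) hx hy hWm hVm hWc hVc hlift
    hts.1 hts.2 le_rfl (hδ.imp_right Or.inr) (Or.inr (Or.inr rfl)) fun t ht => by
      have ht' : t ∈ Icc (0 : ℝ) 1 := ⟨hts.1.trans ht.1, ht.2⟩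
      obtain ⟨⟨-, hWt⟩, ⟨-, hVt⟩, -⟩ := hlift t ht'
      have := hWm hts ht' ht.1
      have := hVm hts ht' ht.1
      rcases hδ with rfl | rfl <;>
        exact ⟨⟨by linarith [hu.1], by linarith⟩, by linarith, by linarith⟩
  have hsecond := reach_of_shifted_lift (δX := δ + m) (δY := 0) hx hy hWm hVm hWc hVc hlift
    le_rfl hts.1 hts.2 (hδ.elim (fun h => Or.inr (Or.inl (by rw [h, zero_add])))
      fun h => Or.inl (by rw [h, neg_add_cancel])) (Or.inl rfl) fun t ht => by
      have ht' : t ∈ Icc (0 : ℝ) 1 := ⟨ht.1, ht.2.trans hts.2⟩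
      obtain ⟨⟨hWt, -⟩, ⟨hVt, -⟩, -⟩ := hlift t ht'
      have := hWm ht' hts ht.2
      have := hVm ht' hts ht.2
      rcases hδ with rfl | rfl <;>
        exact ⟨⟨by linarith, by linarith [hu.2]⟩, by linarith, by linarith⟩
  have hmid : (W 1 + δ, V 1 + -n) = (W 0 + (δ + m), V 0 + 0) := by
    rw [hW1, hV1]
    ext <;> simp only <;> ring
  have hW1ts := hWm hts ⟨zero_le_one, le_rfl⟩ hts.2
  have hV1ts := hVm hts ⟨zero_le_one, le_rfl⟩ hts.2
  have hW0ts := hWm ⟨le_rfl, zero_le_one⟩ hts hts.1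
  have hV0ts := hVm ⟨le_rfl, zero_le_one⟩ hts hts.1
  have hreach := hfirst.trans (hmid ▸ hsecond) (Prod.mk_le_mk.2 ⟨by linarith, by linarith⟩)
    (hmid ▸ Prod.mk_le_mk.2 ⟨by linarith, by linarith⟩)
  refine ⟨W ts + δ, hu, ?_⟩
  rw [hVts] at hreach
  convert hreach using 2 <;> ring

theorem exists_reach_of_reparams (hx : x m = x 0) (hy : y n = y 0)
    {φX φY : ℝ → EuclideanSpace ℝ (Fin k)} (hX : IsReparam m x φX) (hY : IsReparam n y φY)
    (hd : ∀ t ∈ Icc (0 : ℝ) 1, dist (φX t) (φY t) ≤ ε) :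
    ∃ u ∈ Icc 0 (m : ℝ), Reach (Dfree m n x y ε) (u, 0) (u + m, n) := by
  obtain ⟨W, hWm, hWc, -, hW1, hWφ⟩ := hX.exists_lift
  obtain ⟨V, hVm, hVc, hV0, hV1, hVφ⟩ := hY.exists_lift
  exact exists_reach_of_lift hx hy hWm hVm hWc hVc hW1 hV0 hV1 fun t ht =>
    ⟨(hWφ t ht).1, (hVφ t ht).1, by simpa only [(hWφ t ht).2, (hVφ t ht).2] using hd t ht⟩

end Reparam

theorem stmt2_general
    (k m n : ℕ) (hn : 1 ≤ n)
    (x y : ℕ → EuclideanSpace ℝ (Fin k)) (hx : x m = x 0) (hy : y n = y 0)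
    (ε : ℝ)
    (Dε : Set (ℝ × ℝ)) (hDε : Dε = Dfree m n x y ε) :
    (∃ φX φY : ℝ → EuclideanSpace ℝ (Fin k),
        IsReparam m x φX ∧ IsReparam n y φY ∧
        ∀ t ∈ Icc (0:ℝ) 1, dist (φX t) (φY t) ≤ ε) ↔
      ∃ u ∈ Icc (0:ℝ) (m:ℝ),
        (u, (0:ℝ)) ∈ gUp m n Dε ∧ (u + m, (n:ℝ)) ∈ gDown m Dε ∧
        u + m ≤ rUp m n Dε (u, (0:ℝ)) ∧ u ≤ rDown m Dε (u + m, (n:ℝ)) := by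
  subst hDε
  have hn' : (0 : ℝ) < n := Nat.cast_pos.2 hn
  constructor
  · rintro ⟨φX, φY, hX, hY, hd⟩
    obtain ⟨u, hu, h⟩ := exists_reach_of_reparams hx hy hX hY hd
    exact ⟨u, hu, conditions_of_reach hn' hu h⟩
  · rintro ⟨u, hu, hup, hdown, hrUp, hrDown⟩
    exact exists_reparams_of_reach hu
      (reach_of_conditions (isCompact_Dfree hx) hn' hup hdown hrUp hrDown)

theorem stmt2
    (k m n : ℕ) (hk : 1 ≤ k) (hm : 1 ≤ m) (hn : 1 ≤ n)
    (x y : ℕ → EuclideanSpace ℝ (Fin k)) (hx : x m = x 0) (hy : y n = y 0)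
    (ε : ℝ) (hε : 0 ≤ ε)
    (Dε : Set (ℝ × ℝ)) (hDε : Dε = Dfree m n x y ε) :
    (∃ φX φY : ℝ → EuclideanSpace ℝ (Fin k),
        IsReparam m x φX ∧ IsReparam n y φY ∧
        ∀ t ∈ Icc (0:ℝ) 1, dist (φX t) (φY t) ≤ ε) ↔
      ∃ u ∈ Icc (0:ℝ) (m:ℝ),
        (u, (0:ℝ)) ∈ gUp m n Dε ∧ (u + m, (n:ℝ)) ∈ gDown m Dε ∧
        u + m ≤ rUp m n Dε (u, (0:ℝ)) ∧ u ≤ rDown m Dε (u + m, (n:ℝ)) :=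
  stmt2_general k m n hn x y hx hy ε Dε hDε
end
end

section
/- For each i ∈ {1,…,2m} and j ∈ {1,…,n}, the set D_ε ∩ D_ij is convex. -/
/-! On a cell `[i, i+1] × [j, j+1]` both curves are single segments traversed affinely, so
`(u, v) ↦ f_X u - f_Y v` agrees there with an affine map. The free space inside the cell is then
the intersection of the convex cell with the preimage of the closed `ε`-ball under that map. -/

open Set

noncomputable section

theorem Convex.sep_dist_le_of_eqOn_affineMap {V E : Type*} [AddCommGroup V] [Module ℝ V]
    [NormedAddCommGroup E] [NormedSpace ℝ E] {s : Set V} (hs : Convex ℝ s) {f g : V → E}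
    {A B : V →ᵃ[ℝ] E} (hf : EqOn f A s) (hg : EqOn g B s) (ε : ℝ) :
    Convex ℝ {p ∈ s | dist (f p) (g p) ≤ ε} := by
  have h : {p ∈ s | dist (f p) (g p) ≤ ε} = s ∩ (A - B) ⁻¹' Metric.closedBall 0 ε := by
    ext p
    simp only [mem_sep_iff, mem_inter_iff, mem_preimage, Metric.mem_closedBall, dist_zero_right,
      AffineMap.coe_sub, Pi.sub_apply, ← dist_eq_norm]
    exact and_congr_right fun hp => by rw [hf hp, hg hp]
  rw [h]
  exact hs.inter ((convex_closedBall 0 ε).affine_preimage _)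

def segmentAffineMap {E : Type*} [AddCommGroup E] [Module ℝ E] (p q : E) (c : ℝ) : ℝ →ᵃ[ℝ] E :=
  (AffineMap.lineMap p q).comp (AffineEquiv.constVAdd ℝ ℝ (-c)).toAffineMap

@[simp]
theorem segmentAffineMap_apply {E : Type*} [AddCommGroup E] [Module ℝ E] (p q : E) (c u : ℝ) :
    segmentAffineMap p q c u = AffineMap.lineMap p q (u - c) := by
  simp [segmentAffineMap, sub_eq_neg_add]

section Curve

variable {k : ℕ} (x : ℕ → EuclideanSpace ℝ (Fin k))

theorem fCurve_natCast_s8 (a : ℕ) : fCurve x a = x a := by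
  simp [fCurve]

theorem fCurve_eqOn_segmentAffineMap (a : ℕ) :
    EqOn (fCurve x) (segmentAffineMap (x a) (x (a + 1)) a) (Icc a (a + 1)) := by
  rintro u ⟨hau, hua⟩
  rcases hua.eq_or_lt with rfl | hlt
  · simpa using fCurve_natCast_s8 x (a + 1)
  · have hfloor : ⌊u⌋ = a := Int.floor_eq_iff.mpr ⟨by exact_mod_cast hau, by exact_mod_cast hlt⟩
    simp [fCurve, Int.fract, hfloor, AffineMap.lineMap_apply_module]

theorem fCurveExt_eqOn_segmentAffineMap {m : ℕ} (hx : x m = x 0) {i : ℕ} (hi : i < 2 * m) :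
    EqOn (fCurveExt m x) (segmentAffineMap (x (i % m)) (x (i % m + 1)) i) (Icc i (i + 1)) := by
  rintro u ⟨hiu, hui⟩
  rcases lt_or_ge i m with him | hmi
  · have hum : u ≤ m := hui.trans (by exact_mod_cast him)
    rw [fCurveExt, if_pos hum, Nat.mod_eq_of_lt him]
    exact fCurve_eqOn_segmentAffineMap x i ⟨hiu, hui⟩
  · have hmod : i % m = i - m := by
      rw [Nat.mod_eq_sub_mod hmi, Nat.mod_eq_of_lt (by omega)]
    have hcast : ((i - m : ℕ) : ℝ) = i - m := Nat.cast_sub hmi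
    rw [hmod]
    by_cases hum : u ≤ m
    · -- here `u = i = m`, the one point where the wrap-around `x m = x 0` is needed
      have hu : u = m := le_antisymm hum (le_trans (by exact_mod_cast hmi) hiu)
      have him : i = m := by exact_mod_cast le_antisymm (hiu.trans hu.le) (by exact_mod_cast hmi)
      subst hu him
      simp [fCurveExt, fCurve_natCast_s8, hx]
    · rw [fCurveExt, if_neg hum, fCurve_eqOn_segmentAffineMap x (i - m)
        ⟨by rw [hcast]; linarith, by rw [hcast]; linarith⟩]
      simp only [segmentAffineMap_apply, hcast]
      ring_nf

end Curve

theorem cellD_succ (i j : ℕ) :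
    cellD (i + 1) (j + 1) = Icc (i : ℝ) (i + 1) ×ˢ Icc (j : ℝ) (j + 1) := by
  simp [cellD]

theorem Dfree_inter_eq_sep {k m n : ℕ} (x y : ℕ → EuclideanSpace ℝ (Fin k)) (ε : ℝ)
    {C : Set (ℝ × ℝ)} (hC : C ⊆ Dfull m n) :
    Dfree m n x y ε ∩ C = {p ∈ C | dist (fCurveExt m x p.1) (fCurve y p.2) ≤ ε} := by
  ext p
  simp only [Dfree, mem_inter_iff, mem_sep_iff]
  exact ⟨fun ⟨⟨_, hd⟩, hp⟩ => ⟨hp, hd⟩, fun ⟨hp, hd⟩ => ⟨⟨hC hp, hd⟩, hp⟩⟩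

theorem cellD_succ_subset_Dfull {m n i j : ℕ} (hi : i < 2 * m) (hj : j < n) :
    Icc (i : ℝ) (i + 1) ×ˢ Icc (j : ℝ) (j + 1) ⊆ Dfull m n := by
  have hi' : (i : ℝ) + 1 ≤ 2 * m := by exact_mod_cast hi
  have hj' : (j : ℝ) + 1 ≤ n := by exact_mod_cast hj
  rintro ⟨u, v⟩ ⟨⟨hu₁, hu₂⟩, hv₁, hv₂⟩
  exact ⟨⟨(Nat.cast_nonneg i).trans hu₁, hu₂.trans hi'⟩,
    ⟨(Nat.cast_nonneg j).trans hv₁, hv₂.trans hj'⟩⟩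

theorem stmt8_general
    (k m n : ℕ)
    (x y : ℕ → EuclideanSpace ℝ (Fin k)) (hx : x m = x 0)
    (ε : ℝ)
    (Dε : Set (ℝ × ℝ)) (hDε : Dε = Dfree m n x y ε)
    (i j : ℕ) (hi1 : 1 ≤ i) (hi2 : i ≤ 2*m) (hj1 : 1 ≤ j) (hj2 : j ≤ n) :
    Convex ℝ (Dε ∩ cellD i j) := by
  obtain ⟨i, rfl⟩ := Nat.exists_eq_add_of_le' hi1
  obtain ⟨j, rfl⟩ := Nat.exists_eq_add_of_le' hj1
  have hi : i < 2 * m := by omega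
  have hj : j < n := by omega
  rw [hDε, cellD_succ, Dfree_inter_eq_sep x y ε (cellD_succ_subset_Dfull hi hj)]
  refine ((convex_Icc _ _).prod (convex_Icc _ _)).sep_dist_le_of_eqOn_affineMap
    (A := (segmentAffineMap (x (i % m)) (x (i % m + 1)) i).comp AffineMap.fst)
    (B := (segmentAffineMap (y j) (y (j + 1)) j).comp AffineMap.snd) ?_ ?_ ε
  · exact fun p hp => fCurveExt_eqOn_segmentAffineMap x hx hi hp.1
  · exact fun p hp => fCurve_eqOn_segmentAffineMap y j hp.2

theorem stmt8
    (k m n : ℕ) (hk : 1 ≤ k) (hm : 1 ≤ m) (hn : 1 ≤ n)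
    (x y : ℕ → EuclideanSpace ℝ (Fin k)) (hx : x m = x 0) (hy : y n = y 0)
    (ε : ℝ) (hε : 0 ≤ ε)
    (Dε : Set (ℝ × ℝ)) (hDε : Dε = Dfree m n x y ε)
    (i j : ℕ) (hi1 : 1 ≤ i) (hi2 : i ≤ 2*m) (hj1 : 1 ≤ j) (hj2 : j ≤ n) :
    Convex ℝ (Dε ∩ cellD i j) :=
  stmt8_general k m n x y hx ε Dε hDε i j hi1 hi2 hj1 hj2
end
end
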